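/- Let G be a group and H ≤ K ≤ G subgroups such that K has the property that for every g ∈ G with g ∉ K one has H ∩ gHg⁻¹ = {1}. Let n ≥ 1 and let (x₀, …, xₙ) be an (n+1)-tuple of left cosets in G/H whose images in G/K under the natural projection G/H → G/K are pairwise distinct. If g ∈ G satisfies g·xᵢ = xᵢ for all i = 0, …, n, then g = 1. In other words, the isotropy subgroup of such a tuple under the diagonal G-action is trivial. -/

import Mathlib

/-!
If `g` fixes the cosets `aH` and `bH`, then `x = a⁻¹ g a` lies in `H` and so does its
conjugate `t⁻¹ x t = b⁻¹ g b` by `t = a⁻¹ b`. Distinct images of `a` and `b` in `G/K` mean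
`t ∉ K`, so the malnormality hypothesis forces `x = 1`, hence `g = 1`. Two cosets suffice.
-/

namespace QuotientGroup

variable {G : Type*} [Group G]

theorem inv_mul_mul_mem_of_mk_mul_eq {H : Subgroup G} {g a : G}
    (h : (mk (g * a) : G ⧸ H) = mk a) : a⁻¹ * g * a ∈ H := by
  have h' := H.inv_mem (QuotientGroup.eq.1 h)
  simpa only [mul_inv_rev, inv_inv, mul_assoc] using h'

theorem eq_one_of_mk_mul_eq_of_mk_ne {H K : Subgroup G}
    (hconj : ∀ t : G, t ∉ K → ∀ x : G, x ∈ H → t⁻¹ * x * t ∈ H → x = 1)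
    {a b g : G} (hab : (mk a : G ⧸ K) ≠ mk b)
    (ha : (mk (g * a) : G ⧸ H) = mk a) (hb : (mk (g * b) : G ⧸ H) = mk b) :
    g = 1 := by
  have ht : a⁻¹ * b ∉ K := mt QuotientGroup.eq.2 hab
  have hconj_b : (a⁻¹ * b)⁻¹ * (a⁻¹ * g * a) * (a⁻¹ * b) ∈ H := by
    simpa only [mul_inv_rev, inv_inv, mul_assoc, mul_inv_cancel_left]
      using inv_mul_mul_mem_of_mk_mul_eq hb
  have hx := hconj _ ht _ (inv_mul_mul_mem_of_mk_mul_eq ha) hconj_b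
  rwa [mul_assoc, inv_mul_eq_one, eq_comm, mul_eq_right] at hx

end QuotientGroup

theorem stabilizer_of_distinct_tuple_trivial_general
    {G : Type} [Group G] (H K : Subgroup G)
    (hconj : ∀ g : G, g ∉ K → ∀ x : G, x ∈ H → g⁻¹ * x * g ∈ H → x = 1)
    (n : ℕ) (hn : 1 ≤ n) (gs : Fin (n + 1) → G)
    (hdist : ∀ i j : Fin (n + 1), i ≠ j →
      (QuotientGroup.mk (gs i) : G ⧸ K) ≠ QuotientGroup.mk (gs j))
    (g : G)
    (hfix : ∀ i : Fin (n + 1),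
      (QuotientGroup.mk (g * gs i) : G ⧸ H) = QuotientGroup.mk (gs i)) :
    g = 1 := by
  let one : Fin (n + 1) := ⟨1, by omega⟩
  have h01 : (0 : Fin (n + 1)) ≠ one := by simp [one, Fin.ext_iff]
  exact QuotientGroup.eq_one_of_mk_mul_eq_of_mk_ne hconj (hdist 0 one h01) (hfix 0) (hfix one)

/-- Let `G` be a group with subgroups `H ≤ K ≤ G` such that `H ∩ gHg⁻¹ = {1}` for every
`g ∉ K`.  Let `n ≥ 1` and let `(g₀H, …, gₙH)` be a tuple of left cosets whose images in
`G/K` are pairwise distinct.  If `g ∈ G` fixes each coset `gᵢH` (i.e.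
`(g gᵢ)H = gᵢH` for all `i`), then `g = 1`: the isotropy subgroup of such a tuple under
the diagonal `G`-action is trivial. -/
theorem stabilizer_of_distinct_tuple_trivial
    {G : Type} [Group G] (H K : Subgroup G) (hHK : H ≤ K)
    (hconj : ∀ g : G, g ∉ K → ∀ x : G, x ∈ H → g⁻¹ * x * g ∈ H → x = 1)
    (n : ℕ) (hn : 1 ≤ n) (gs : Fin (n + 1) → G)
    (hdist : ∀ i j : Fin (n + 1), i ≠ j →
      (QuotientGroup.mk (gs i) : G ⧸ K) ≠ QuotientGroup.mk (gs j))
    (g : G)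
    (hfix : ∀ i : Fin (n + 1),
      (QuotientGroup.mk (g * gs i) : G ⧸ H) = QuotientGroup.mk (gs i)) :
    g = 1 :=
  stabilizer_of_distinct_tuple_trivial_general H K hconj n hn gs hdist g hfix
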